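/- arXiv:2111.14098 — 2 statements merged into one kernel-verified Lean document; each statement's English description precedes it below -/
import Mathlib

section
/- Let 1 ≤ j ≤ p be integers, let Ā_1,…,Ā_p be continuous multilinear maps on ℝ^n (Ā_i being i-multilinear) with ‖Ā_i‖ ≤ L̄ for all i, where L̄ > 0, and let σ > 0, α > 0. Suppose δ satisfies 0 < δ ≤ min(1, α / (4 max(L̄, σ))) and d ∈ ℝ^n satisfies ‖d‖ ≤ δ and ΔT̄_j(d) ≥ α δ^j / j!. Then the regularized model decrement satisfies Δm̄(d) ≥ (1/2) α δ^j / j!. -/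
/-! Since `δ ≤ 1`, the Taylor terms of degree `i ∈ (j, p]` and the regularisation term (degree
`p + 1`) are each bounded by `max(L̄, σ) δ^{j+1} / i!`, and `∑_{i > j} 1/i! ≤ 1/j!`. Hence
`Δm̄(d) ≥ ΔT̄_j(d) − max(L̄, σ) δ^{j+1} / j!`, and `max(L̄, σ) δ ≤ α/4` makes this loss at most
a quarter of `α δ^j / j!`. -/

/-- The inexact Taylor decrement of degree `j` built from the
`i`-multilinear maps `A i` (the inexact `i`-th derivatives), evaluated at `d`:
`ΔT̄_j(d) = −∑_{i=1}^j Ā_i[d]^i / i!`. -/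
noncomputable def taylorDecrement (n j : ℕ)
    (A : ∀ i : ℕ, ContinuousMultilinearMap ℝ
      (fun _ : Fin i => EuclideanSpace ℝ (Fin n)) ℝ)
    (d : EuclideanSpace ℝ (Fin n)) : ℝ :=
  -∑ i ∈ Finset.Icc 1 j, (A i fun _ => d) / (i.factorial : ℝ)

/-- The regularized model decrement
`Δm̄(d) = ΔT̄_p(d) − (σ / (p+1)!) ‖d‖^{p+1}`. -/
noncomputable def modelDecrement (n p : ℕ)
    (A : ∀ i : ℕ, ContinuousMultilinearMap ℝ
      (fun _ : Fin i => EuclideanSpace ℝ (Fin n)) ℝ)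
    (σ : ℝ) (d : EuclideanSpace ℝ (Fin n)) : ℝ :=
  taylorDecrement n p A d - σ / ((p + 1).factorial : ℝ) * ‖d‖ ^ (p + 1)

theorem sum_Ioc_inv_factorial_le {j q : ℕ} (hj : 1 ≤ j) (hjq : j ≤ q) :
    ∑ i ∈ Finset.Ioc j q, (1 : ℝ) / i.factorial ≤ 1 / j.factorial - 1 / q.factorial := by
  induction q, hjq using Nat.le_induction with
  | base => simp
  | succ q hjq ih =>
    rw [Finset.sum_Ioc_succ_top (by omega)]
    have hq : (1 : ℝ) ≤ q := by exact_mod_cast hj.trans hjq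
    have hfac : ((q + 1).factorial : ℝ) = (q + 1) * q.factorial := by
      push_cast [Nat.factorial_succ]; ring
    have hhalf : 1 / ((q + 1).factorial : ℝ) + 1 / (q + 1).factorial ≤ 1 / q.factorial := by
      rw [← add_div, hfac, div_le_div_iff₀ (by positivity) (by positivity)]
      nlinarith [(Nat.factorial_pos q : 0 < q.factorial)]
    linarith

theorem ContinuousMultilinearMap.apply_const_le_of_opNorm_le {E : Type*}
    [NormedAddCommGroup E] [NormedSpace ℝ E] {i : ℕ}
    (A : ContinuousMultilinearMap ℝ (fun _ : Fin i => E) ℝ)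
    {d : E} {M δ : ℝ} (hA : ‖A‖ ≤ M) (hd : ‖d‖ ≤ δ) :
    (A fun _ => d) ≤ M * δ ^ i := by
  have h := A.le_mul_prod_of_opNorm_le_of_le hA fun _ => hd
  rw [Finset.prod_const, Finset.card_univ, Fintype.card_fin] at h
  exact (le_abs_self _).trans h

theorem taylorDecrement_sub_taylorDecrement (n : ℕ) {j p : ℕ} (hjp : j ≤ p)
    (A : ∀ i : ℕ, ContinuousMultilinearMap ℝ
      (fun _ : Fin i => EuclideanSpace ℝ (Fin n)) ℝ)
    (d : EuclideanSpace ℝ (Fin n)) :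
    taylorDecrement n j A d - taylorDecrement n p A d
      = ∑ i ∈ Finset.Ioc j p, (A i fun _ => d) / i.factorial := by
  have hIcc (k : ℕ) : Finset.Icc 1 k = Finset.Ioc 0 k := rfl
  rw [taylorDecrement, taylorDecrement, hIcc, hIcc,
    ← Finset.sum_Ioc_consecutive _ (Nat.zero_le j) hjp]
  ring

theorem taylorDecrement_sub_le_modelDecrement (n : ℕ) {j p : ℕ} (hj : 1 ≤ j) (hjp : j ≤ p)
    (A : ∀ i : ℕ, ContinuousMultilinearMap ℝ
      (fun _ : Fin i => EuclideanSpace ℝ (Fin n)) ℝ)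
    {M σ δ : ℝ} (hA : ∀ i ∈ Finset.Ioc j p, ‖A i‖ ≤ M) (hσ : 0 ≤ σ) (hσM : σ ≤ M)
    (hδ1 : δ ≤ 1) {d : EuclideanSpace ℝ (Fin n)} (hd : ‖d‖ ≤ δ) :
    taylorDecrement n j A d - M * δ ^ (j + 1) / j.factorial ≤ modelDecrement n p A σ d := by
  have hδ0 : 0 ≤ δ := (norm_nonneg d).trans hd
  have hM : 0 ≤ M := hσ.trans hσM
  set X := M * δ ^ (j + 1)
  have hpow {i : ℕ} (hi : j + 1 ≤ i) : M * δ ^ i ≤ X :=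
    mul_le_mul_of_nonneg_left (pow_le_pow_of_le_one hδ0 hδ1 hi) hM
  have hterms : ∑ i ∈ Finset.Ioc j p, (A i fun _ => d) / i.factorial
      ≤ X * ∑ i ∈ Finset.Ioc j p, (1 : ℝ) / i.factorial := by
    rw [Finset.mul_sum]
    gcongr with i hi
    rw [mul_one_div]
    gcongr
    exact ((A i).apply_const_le_of_opNorm_le (hA i hi) hd).trans (hpow (Finset.mem_Ioc.1 hi).1)
  have hreg : σ / (p + 1).factorial * ‖d‖ ^ (p + 1) ≤ X * (1 / (p + 1).factorial) := by
    rw [div_mul_eq_mul_div, mul_one_div]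
    gcongr
    exact (mul_le_mul hσM (pow_le_pow_left₀ (norm_nonneg d) hd _) (by positivity) hM).trans
      (hpow (by omega))
  have htail : X * ∑ i ∈ Finset.Ioc j p, (1 : ℝ) / i.factorial + X * (1 / (p + 1).factorial)
      ≤ X * (1 / j.factorial) := by
    have h := sum_Ioc_inv_factorial_le hj (Nat.le_succ_of_le hjp)
    rw [Finset.sum_Ioc_succ_top hjp] at h
    rw [← mul_add]
    gcongr
    linarith [(by positivity : (0 : ℝ) ≤ 1 / (p + 1).factorial)]
  have hsplit := taylorDecrement_sub_taylorDecrement n hjp A d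
  rw [modelDecrement, div_eq_mul_one_div X]
  linarith

theorem model_decrement_lower_bound_general (n p j : ℕ) (hj : 1 ≤ j) (hjp : j ≤ p)
    (Abar : ∀ i : ℕ, ContinuousMultilinearMap ℝ
      (fun _ : Fin i => EuclideanSpace ℝ (Fin n)) ℝ)
    (Lbar : ℝ)
    (hbd : ∀ i ∈ Finset.Icc 1 p, ‖Abar i‖ ≤ Lbar)
    (σ α : ℝ) (hσ : 0 < σ) (hα : 0 < α)
    (δ : ℝ) (hδ0 : 0 < δ) (hδ : δ ≤ min 1 (α / (4 * max Lbar σ)))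
    (d : EuclideanSpace ℝ (Fin n)) (hd : ‖d‖ ≤ δ)
    (hDT : α * δ ^ j / (j.factorial : ℝ) ≤ taylorDecrement n j Abar d) :
    (1 / 2) * α * δ ^ j / (j.factorial : ℝ) ≤ modelDecrement n p Abar σ d := by
  have hdecr := taylorDecrement_sub_le_modelDecrement n hj hjp Abar
    (fun i hi => (hbd i (Finset.Ioc_subset_Icc_self (Finset.Ioc_subset_Ioc_left hj hi))).trans
      (le_max_left _ _))
    hσ.le (le_max_right Lbar σ) (hδ.trans (min_le_left _ _)) hd
  set M := max Lbar σ
  have hMδ : M * δ ≤ α / 4 := by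
    have := (le_div_iff₀ (by positivity)).1 (hδ.trans (min_le_right _ _))
    linarith
  have hloss : M * δ ^ (j + 1) / j.factorial ≤ α / 4 * δ ^ j / j.factorial := by
    rw [pow_succ', ← mul_assoc]
    gcongr
  have hpos : 0 ≤ α * δ ^ j / j.factorial := by positivity
  calc (1 / 2) * α * δ ^ j / (j.factorial : ℝ)
      = α * δ ^ j / j.factorial - α / 4 * δ ^ j / j.factorial
        - α * δ ^ j / j.factorial / 4 := by ring
    _ ≤ taylorDecrement n j Abar d - M * δ ^ (j + 1) / j.factorial := by linarith
    _ ≤ modelDecrement n p Abar σ d := hdecr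

/-- If `δ ≤ min(1, α/(4 max(L̄,σ)))`, `‖d‖ ≤ δ` and
`ΔT̄_j(d) ≥ α δ^j / j!`, then `Δm̄(d) ≥ (1/2) α δ^j / j!`. -/
theorem model_decrement_lower_bound (n p j : ℕ) (hj : 1 ≤ j) (hjp : j ≤ p)
    (Abar : ∀ i : ℕ, ContinuousMultilinearMap ℝ
      (fun _ : Fin i => EuclideanSpace ℝ (Fin n)) ℝ)
    (Lbar : ℝ) (hLbar : 0 < Lbar)
    (hbd : ∀ i ∈ Finset.Icc 1 p, ‖Abar i‖ ≤ Lbar)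
    (σ α : ℝ) (hσ : 0 < σ) (hα : 0 < α)
    (δ : ℝ) (hδ0 : 0 < δ) (hδ : δ ≤ min 1 (α / (4 * max Lbar σ)))
    (d : EuclideanSpace ℝ (Fin n)) (hd : ‖d‖ ≤ δ)
    (hDT : α * δ ^ j / (j.factorial : ℝ) ≤ taylorDecrement n j Abar d) :
    (1 / 2) * α * δ ^ j / (j.factorial : ℝ) ≤ modelDecrement n p Abar σ d :=
  model_decrement_lower_bound_general n p j hj hjp Abar Lbar hbd σ α hσ hα δ hδ0 hδ d hd hDT
end

section
/- Let 1 ≤ j ≤ p be integers, let Ā_1,…,Ā_p be continuous multilinear maps on ℝ^n (Ā_i being i-multilinear) with ‖Ā_i‖ ≤ L̄ for all i, where L̄ > 0, let σ > 0, ς ∈ (0,1], ω ∈ (0,1), and ε ∈ (0,1]. Suppose δ satisfies 0 < δ ≤ ς ε / (4 (1+ω) max(L̄, σ)) and d ∈ ℝ^n satisfies ‖d‖ ≤ δ and ΔT̄_j(d) > (ς ε / (1+ω)) · δ^j / j!. Then the regularized model decrement satisfies Δm̄(d) ≥ (ς ε / (2(1+ω))) · δ^j / j!. -/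
open Finset Nat

section PowDivFactorial

variable {δ : ℝ}

lemma pow_succ_div_factorial_succ (δ : ℝ) (k : ℕ) :
    δ ^ (k + 1) / (k + 1)! = δ ^ k / k ! * (δ / (k + 1)) := by
  rw [pow_succ, factorial_succ]
  push_cast
  field_simp

lemma pow_div_factorial_le_pow_div_factorial {i j : ℕ} (hij : i ≤ j) (hjδ : (j : ℝ) ≤ δ) :
    δ ^ i / i ! ≤ δ ^ j / j ! := by
  induction j, hij using Nat.le_induction with
  | base => rfl
  | succ m _ ih =>
    push_cast at hjδ
    have hδ0 : 0 ≤ δ := by linarith [(m.cast_nonneg : (0 : ℝ) ≤ m)]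
    rw [pow_succ_div_factorial_succ]
    refine (ih (by linarith)).trans (le_mul_of_one_le_right (by positivity) ?_)
    rw [one_le_div (by positivity)]
    exact hjδ

lemma sum_Icc_one_pow_div_factorial_le {j : ℕ} (hjδ : (j : ℝ) ≤ δ) :
    ∑ i ∈ Icc 1 j, δ ^ i / i ! ≤ j * (δ ^ j / j !) := by
  have h := sum_le_card_nsmul (Icc 1 j) (fun i => δ ^ i / i !) (δ ^ j / j !)
    fun i hi => pow_div_factorial_le_pow_div_factorial (mem_Icc.1 hi).2 hjδ
  simpa using h

/-- Telescoping invariant: each new term `T_{q+1}` is paid for by the drop from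
`(j + 2) T_{q+1}` to `(j + 2) T_{q+2}`, since `(j + 2) δ / (q + 2) ≤ j + 1`. -/
lemma sum_Ioc_pow_div_factorial_add_le (hδ0 : 0 ≤ δ) {j q : ℕ} (hδ : δ ≤ j + 1)
    (hjq : j ≤ q) :
    ∑ i ∈ Ioc j q, δ ^ i / i ! + (j + 2) * (δ ^ (q + 1) / (q + 1)!) ≤
      (j + 2) * (δ ^ (j + 1) / (j + 1)!) := by
  induction q, hjq using Nat.le_induction with
  | base => simp
  | succ q hjq ih =>
    have hjq' : (j : ℝ) ≤ q := by exact_mod_cast hjq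
    have hratio : (j + 2) * (δ / (q + 1 + 1)) ≤ j + 1 := by
      rw [← mul_div_assoc, div_le_iff₀ (by positivity)]
      nlinarith
    have hstep : (j + 2) * (δ ^ (q + 1 + 1) / (q + 1 + 1)!) ≤
        (j + 1) * (δ ^ (q + 1) / (q + 1)!) := by
      rw [pow_succ_div_factorial_succ, mul_comm (δ ^ (q + 1) / _), ← mul_assoc]
      push_cast
      exact mul_le_mul_of_nonneg_right hratio (by positivity)
    rw [sum_Ioc_succ_top (by omega)]
    linarith

lemma sum_Ioc_pow_div_factorial_le (hδ0 : 0 ≤ δ) {j q : ℕ} (hδ : δ ≤ j + 1)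
    (hjq : j ≤ q) :
    ∑ i ∈ Ioc j q, δ ^ i / i ! ≤ 2 * δ * (δ ^ j / j !) := by
  have h := sum_Ioc_pow_div_factorial_add_le hδ0 hδ hjq
  have hlast : 0 ≤ (j + 2 : ℝ) * (δ ^ (q + 1) / (q + 1)!) := by positivity
  have hfirst : (j + 2 : ℝ) * (δ ^ (j + 1) / (j + 1)!) ≤ 2 * δ * (δ ^ j / j !) := by
    rw [pow_succ_div_factorial_succ, mul_comm (δ ^ j / _), ← mul_assoc]
    refine mul_le_mul_of_nonneg_right ?_ (by positivity)
    rw [← mul_div_assoc, div_le_iff₀ (by positivity)]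
    nlinarith
  linarith

lemma lt_add_one_of_lt_mul_sum_pow_div_factorial {M c : ℝ} {j : ℕ} (hM : 0 ≤ M)
    (hMδ : M * δ ≤ c) (h : c * (δ ^ j / j !) < M * ∑ i ∈ Icc 1 j, δ ^ i / i !) :
    δ < j + 1 := by
  by_contra! hjδ
  have hT : 0 ≤ δ ^ j / j ! := by
    have : (0 : ℝ) ≤ δ := by linarith [(j.cast_nonneg : (0 : ℝ) ≤ j)]
    positivity
  have hsum := mul_le_mul_of_nonneg_left (sum_Icc_one_pow_div_factorial_le (j := j) (δ := δ)
    (by linarith)) hM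
  nlinarith [mul_le_mul_of_nonneg_right hMδ hT, mul_le_mul_of_nonneg_left hjδ hM]

end PowDivFactorial

lemma abs_sum_apply_div_factorial_le {E : Type*} [NormedAddCommGroup E] [NormedSpace ℝ E]
    (A : ∀ i : ℕ, ContinuousMultilinearMap ℝ (fun _ : Fin i => E) ℝ) {s : Finset ℕ} {M δ : ℝ}
    {d : E}
    (hA : ∀ i ∈ s, ‖A i‖ ≤ M) (hd : ‖d‖ ≤ δ) :
    |∑ i ∈ s, A i (fun _ => d) / i !| ≤ M * ∑ i ∈ s, δ ^ i / i ! := by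
  have hδ0 : 0 ≤ δ := (norm_nonneg d).trans hd
  rw [mul_sum]
  refine (abs_sum_le_sum_abs _ _).trans (sum_le_sum fun i hi => ?_)
  rw [abs_div, Nat.abs_cast, ← Real.norm_eq_abs, mul_div_assoc']
  gcongr
  calc ‖A i fun _ => d‖ ≤ ‖A i‖ * δ ^ i :=
        (A i).le_opNorm_mul_pow_of_le ((pi_norm_le_iff_of_nonneg hδ0).2 fun _ => hd)
    _ ≤ M * δ ^ i := by gcongr; exact hA i hi

section Decrements

variable {n : ℕ} (A : ∀ i : ℕ, ContinuousMultilinearMap ℝ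
  (fun _ : Fin i => EuclideanSpace ℝ (Fin n)) ℝ) {M δ : ℝ} {d : EuclideanSpace ℝ (Fin n)}

lemma taylorDecrement_le_mul_sum {j : ℕ} (hA : ∀ i ∈ Icc 1 j, ‖A i‖ ≤ M) (hd : ‖d‖ ≤ δ) :
    taylorDecrement n j A d ≤ M * ∑ i ∈ Icc 1 j, δ ^ i / i ! :=
  (neg_le_abs _).trans (abs_sum_apply_div_factorial_le A hA hd)

lemma taylorDecrement_eq_sub_sum_Ioc {j p : ℕ} (hjp : j ≤ p) (d : EuclideanSpace ℝ (Fin n)) :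
    taylorDecrement n p A d =
      taylorDecrement n j A d - ∑ i ∈ Ioc j p, A i (fun _ => d) / i ! := by
  have hIcc : ∀ k, Icc 1 k = Ioc 0 k := Icc_add_one_left_eq_Ioc 0
  simp only [taylorDecrement, hIcc, ← sum_Ioc_consecutive _ (Nat.zero_le j) hjp]
  ring

lemma taylorDecrement_sub_mul_sum_le_modelDecrement {j p : ℕ} (hjp : j ≤ p) {σ : ℝ}
    (hM : 0 ≤ M) (hA : ∀ i ∈ Ioc j p, ‖A i‖ ≤ M) (hσ : σ ≤ M) (hd : ‖d‖ ≤ δ) :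
    taylorDecrement n j A d - M * ∑ i ∈ Ioc j (p + 1), δ ^ i / i ! ≤
      modelDecrement n p A σ d := by
  have hterms := le_of_abs_le (abs_sum_apply_div_factorial_le A hA hd)
  have hreg : σ / (p + 1)! * ‖d‖ ^ (p + 1) ≤ M * (δ ^ (p + 1) / (p + 1)!) := by
    rw [div_mul_eq_mul_div, ← mul_div_assoc]
    gcongr
  rw [modelDecrement, taylorDecrement_eq_sub_sum_Ioc A hjp, sum_Ioc_succ_top hjp, mul_add]
  linarith

end Decrements

theorem model_decrement_lower_bound_step1_general (n p j : ℕ) (hjp : j ≤ p)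
    (Abar : ∀ i : ℕ, ContinuousMultilinearMap ℝ
      (fun _ : Fin i => EuclideanSpace ℝ (Fin n)) ℝ)
    (Lbar : ℝ) (hLbar : 0 < Lbar)
    (hbd : ∀ i ∈ Finset.Icc 1 p, ‖Abar i‖ ≤ Lbar)
    (σ ς ω ε : ℝ)
    (hω0 : 0 < ω)
    (δ : ℝ) (hδ : δ ≤ ς * ε / (4 * (1 + ω) * max Lbar σ))
    (d : EuclideanSpace ℝ (Fin n)) (hd : ‖d‖ ≤ δ)
    (hDT : ς * ε / (1 + ω) * δ ^ j / (j.factorial : ℝ) <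
      taylorDecrement n j Abar d) :
    ς * ε / (2 * (1 + ω)) * δ ^ j / (j.factorial : ℝ) ≤
      modelDecrement n p Abar σ d := by
  set M := max Lbar σ
  set c := ς * ε / (1 + ω) with hc
  have hM : 0 < M := hLbar.trans_le (le_max_left _ _)
  have hδ0 : 0 ≤ δ := (norm_nonneg d).trans hd
  have hMδ : 4 * M * δ ≤ c := by
    rw [le_div_iff₀ (by positivity)]
    linarith [(le_div_iff₀ (by positivity)).1 hδ]
  have hA : ∀ i ∈ Icc 1 p, ‖Abar i‖ ≤ M := fun i hi => (hbd i hi).trans (le_max_left _ _)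
  have hDT' : c * (δ ^ j / j !) < taylorDecrement n j Abar d := by rwa [← mul_div_assoc]
  have hδj : δ < j + 1 := lt_add_one_of_lt_mul_sum_pow_div_factorial hM.le
    (by linarith [mul_nonneg hM.le hδ0]) (hDT'.trans_le (taylorDecrement_le_mul_sum Abar
      (fun i hi => hA i (Icc_subset_Icc_right hjp hi)) hd))
  have htail := sum_Ioc_pow_div_factorial_le hδ0 hδj.le (by omega : j ≤ p + 1)
  have hmodel := taylorDecrement_sub_mul_sum_le_modelDecrement Abar hjp
    hM.le (fun i hi => hA i (mem_Icc.2 ⟨by linarith [(mem_Ioc.1 hi).1], (mem_Ioc.1 hi).2⟩))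
    (le_max_right _ _) hd
  calc ς * ε / (2 * (1 + ω)) * δ ^ j / j ! = c * (δ ^ j / j !) - c / 2 * (δ ^ j / j !) := by
        rw [hc, mul_comm 2 (1 + ω), ← div_div]; ring
    _ ≤ taylorDecrement n j Abar d - M * (2 * δ * (δ ^ j / j !)) := by
        have hT : 0 ≤ δ ^ j / j ! := by positivity
        nlinarith [mul_le_mul_of_nonneg_right hMδ hT]
    _ ≤ taylorDecrement n j Abar d - M * ∑ i ∈ Ioc j (p + 1), δ ^ i / i ! := by gcongr
    _ ≤ modelDecrement n p Abar σ d := hmodel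

/-- If `δ ≤ ς ε / (4 (1+ω) max(L̄,σ))`, `‖d‖ ≤ δ` and
`ΔT̄_j(d) > (ς ε / (1+ω)) δ^j / j!`, then
`Δm̄(d) ≥ (ς ε / (2(1+ω))) δ^j / j!`. -/
theorem model_decrement_lower_bound_step1 (n p j : ℕ) (hj : 1 ≤ j) (hjp : j ≤ p)
    (Abar : ∀ i : ℕ, ContinuousMultilinearMap ℝ
      (fun _ : Fin i => EuclideanSpace ℝ (Fin n)) ℝ)
    (Lbar : ℝ) (hLbar : 0 < Lbar)
    (hbd : ∀ i ∈ Finset.Icc 1 p, ‖Abar i‖ ≤ Lbar)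
    (σ ς ω ε : ℝ) (hσ : 0 < σ) (hς0 : 0 < ς) (hς1 : ς ≤ 1)
    (hω0 : 0 < ω) (hω1 : ω < 1) (hε0 : 0 < ε) (hε1 : ε ≤ 1)
    (δ : ℝ) (hδ0 : 0 < δ) (hδ : δ ≤ ς * ε / (4 * (1 + ω) * max Lbar σ))
    (d : EuclideanSpace ℝ (Fin n)) (hd : ‖d‖ ≤ δ)
    (hDT : ς * ε / (1 + ω) * δ ^ j / (j.factorial : ℝ) <
      taylorDecrement n j Abar d) :
    ς * ε / (2 * (1 + ω)) * δ ^ j / (j.factorial : ℝ) ≤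
      modelDecrement n p Abar σ d :=
  model_decrement_lower_bound_step1_general n p j hjp Abar Lbar hLbar hbd σ ς ω ε hω0 δ hδ d hd hDT
end
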